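/- arXiv:2110.13180 — 3 statements merged into one kernel-verified Lean document; each statement's English description precedes it below -/
import Mathlib

section
/- Fix β > 0, α ∈ (0,1], and ε' ∈ (0, α/2). The function g : ℝ_{>0} → ℝ, g(q) = ((1 − e^{−β/(4q)})/2)^{2q}, is strictly monotonically decreasing, and the equation g(q) = 2ε'/α has a unique positive real solution q̃. Moreover, for fixed ε' and α, q̃ is strictly increasing as a function of β. -/
open Real Filter Set Topology

/-- The implicit equation of the imaginary-time no-fast-forwarding bound:
`g β q = ((1 - e^{-β/(4q)})/2)^(2q)` (real power). -/
noncomputable def qiteBoundFn (β q : ℝ) : ℝ :=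
  ((1 - Real.exp (-β / (4 * q))) / 2) ^ (2 * q)

lemma qite_base_pos {β q : ℝ} (hβ : 0 < β) (hq : 0 < q) :
    0 < (1 - Real.exp (-β / (4 * q))) / 2 := by
  have h : Real.exp (-β / (4 * q)) < 1 := by
    rw [Real.exp_lt_one_iff]
    exact div_neg_of_neg_of_pos (by linarith) (by positivity)
  linarith

lemma qite_base_lt_one {β q : ℝ} : (1 - Real.exp (-β / (4 * q))) / 2 < 1 := by
  have := Real.exp_pos (-β / (4 * q))
  linarith

lemma qite_base_anti {β : ℝ} (hβ : 0 < β) {q₁ q₂ : ℝ} (h1 : 0 < q₁) (h : q₁ < q₂) :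
    (1 - Real.exp (-β / (4 * q₂))) / 2 < (1 - Real.exp (-β / (4 * q₁))) / 2 := by
  have h' : Real.exp (-β / (4 * q₁)) < Real.exp (-β / (4 * q₂)) := by
    apply Real.exp_lt_exp.mpr
    rw [neg_div, neg_div, neg_lt_neg_iff]
    exact div_lt_div_of_pos_left hβ (by positivity) (by linarith)
  linarith

lemma qite_anti {β : ℝ} (hβ : 0 < β) : StrictAntiOn (qiteBoundFn β) (Set.Ioi 0) := by
  intro q₁ h1 q₂ h2 h
  simp only [Set.mem_Ioi] at h1 h2
  unfold qiteBoundFn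
  calc ((1 - Real.exp (-β / (4 * q₂))) / 2) ^ (2 * q₂)
      < ((1 - Real.exp (-β / (4 * q₂))) / 2) ^ (2 * q₁) :=
        Real.rpow_lt_rpow_of_exponent_gt (qite_base_pos hβ h2) qite_base_lt_one
          (by linarith)
    _ < ((1 - Real.exp (-β / (4 * q₁))) / 2) ^ (2 * q₁) :=
        Real.rpow_lt_rpow (le_of_lt (qite_base_pos hβ h2)) (qite_base_anti hβ h1 h)
          (by linarith)

lemma qite_mono_beta {β₁ β₂ q : ℝ} (hβ₁ : 0 < β₁) (h : β₁ < β₂) (hq : 0 < q) :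
    qiteBoundFn β₁ q < qiteBoundFn β₂ q := by
  unfold qiteBoundFn
  apply Real.rpow_lt_rpow (le_of_lt (qite_base_pos hβ₁ hq)) _ (by linarith)
  have h' : Real.exp (-β₂ / (4 * q)) < Real.exp (-β₁ / (4 * q)) := by
    apply Real.exp_lt_exp.mpr
    rw [neg_div, neg_div, neg_lt_neg_iff]
    gcongr
  linarith

lemma qite_base_contOn {β : ℝ} : ContinuousOn
    (fun q : ℝ => (1 - Real.exp (-β / (4 * q))) / 2) (Set.Ioi 0) := by
  apply ContinuousOn.div_const
  apply continuousOn_const.sub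
  apply Real.continuous_exp.comp_continuousOn
  apply ContinuousOn.div continuousOn_const (by fun_prop)
  intro q hq
  have : (0:ℝ) < q := hq
  positivity

lemma qite_contOn {β : ℝ} (hβ : 0 < β) :
    ContinuousOn (qiteBoundFn β) (Set.Ioi 0) := by
  apply ContinuousOn.rpow qite_base_contOn (by fun_prop)
  intro q hq
  exact Or.inl (ne_of_gt (qite_base_pos hβ hq))

lemma qite_tendsto_zero {β : ℝ} (hβ : 0 < β) :
    Tendsto (qiteBoundFn β) (𝓝[>] (0:ℝ)) (𝓝 1) := by
  have hbot : Tendsto (fun q : ℝ => -β / (4 * q)) (𝓝[>] (0:ℝ)) atBot := by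
    have h1 : Tendsto (fun q : ℝ => (β / 4) * q⁻¹) (𝓝[>] (0:ℝ)) atTop :=
      (tendsto_inv_nhdsGT_zero).const_mul_atTop (by positivity)
    have h2 : Tendsto (fun q : ℝ => -((β / 4) * q⁻¹)) (𝓝[>] (0:ℝ)) atBot :=
      tendsto_neg_atBot_iff.mpr h1
    refine h2.congr (fun q => ?_)
    field_simp
  have hbase : Tendsto (fun q : ℝ => (1 - Real.exp (-β / (4 * q))) / 2)
      (𝓝[>] (0:ℝ)) (𝓝 (1/2)) := by
    have := (Real.tendsto_exp_atBot.comp hbot)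
    have h3 : Tendsto (fun q : ℝ => (1 - Real.exp (-β / (4 * q))) / 2)
        (𝓝[>] (0:ℝ)) (𝓝 ((1 - 0) / 2)) := ((tendsto_const_nhds.sub this).div_const 2)
    simpa using h3
  have hlog : Tendsto (fun q : ℝ => Real.log ((1 - Real.exp (-β / (4 * q))) / 2))
      (𝓝[>] (0:ℝ)) (𝓝 (Real.log (1/2))) :=
    (Real.continuousAt_log (by norm_num)).tendsto.comp hbase
  have h2q : Tendsto (fun q : ℝ => 2 * q) (𝓝[>] (0:ℝ)) (𝓝 0) := by
    have : Tendsto (fun q : ℝ => 2 * q) (𝓝 (0:ℝ)) (𝓝 (2 * 0)) :=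
      (continuous_const.mul continuous_id).tendsto 0
    simpa using this.mono_left nhdsWithin_le_nhds
  have hmul : Tendsto
      (fun q : ℝ => Real.log ((1 - Real.exp (-β / (4 * q))) / 2) * (2 * q))
      (𝓝[>] (0:ℝ)) (𝓝 0) := by
    have := hlog.mul h2q
    simpa using this
  have hexp := Real.continuous_exp.continuousAt.tendsto.comp hmul
  rw [Real.exp_zero] at hexp
  refine hexp.congr' ?_
  filter_upwards [self_mem_nhdsWithin] with q hq
  have hq : (0:ℝ) < q := hq
  rw [qiteBoundFn, Real.rpow_def_of_pos (qite_base_pos hβ hq)]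
  rfl

lemma qite_tendsto_atTop {β : ℝ} (hβ : 0 < β) :
    Tendsto (qiteBoundFn β) atTop (𝓝 0) := by
  have hz : Tendsto (fun q : ℝ => -β / (4 * q)) atTop (𝓝 0) := by
    have h1 : Tendsto (fun q : ℝ => (-β / 4) * q⁻¹) atTop (𝓝 ((-β / 4) * 0)) :=
      tendsto_inv_atTop_zero.const_mul _
    simp only [mul_zero] at h1
    refine h1.congr (fun q => ?_)
    field_simp
  have hbase : Tendsto (fun q : ℝ => (1 - Real.exp (-β / (4 * q))) / 2)
      atTop (𝓝 0) := by
    have := Real.continuous_exp.continuousAt.tendsto.comp hz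
    rw [Real.exp_zero] at this
    have h3 : Tendsto (fun q : ℝ => (1 - Real.exp (-β / (4 * q))) / 2)
        atTop (𝓝 ((1 - 1) / 2)) := ((tendsto_const_nhds.sub this).div_const 2)
    simpa using h3
  have hbase' : Tendsto (fun q : ℝ => (1 - Real.exp (-β / (4 * q))) / 2)
      atTop (𝓝[>] (0:ℝ)) := by
    rw [tendsto_nhdsWithin_iff]
    refine ⟨hbase, ?_⟩
    filter_upwards [eventually_gt_atTop (0:ℝ)] with q hq
    exact qite_base_pos hβ hq
  have hlog : Tendsto (fun q : ℝ => Real.log ((1 - Real.exp (-β / (4 * q))) / 2))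
      atTop atBot := Real.tendsto_log_nhdsGT_zero.comp hbase'
  have h2q : Tendsto (fun q : ℝ => 2 * q) atTop atTop :=
    tendsto_const_mul_atTop_of_pos (by norm_num) |>.mpr tendsto_id
  have hmul := hlog.atBot_mul_atTop₀ h2q
  have hexp := Real.tendsto_exp_atBot.comp hmul
  refine hexp.congr' ?_
  filter_upwards [eventually_gt_atTop (0:ℝ)] with q hq
  rw [qiteBoundFn, Real.rpow_def_of_pos (qite_base_pos hβ hq)]
  rfl

theorem stmt_2 (β α ε' : ℝ) (hβ : 0 < β) (hα : α ∈ Set.Ioc (0 : ℝ) 1)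
    (hε : ε' ∈ Set.Ioo 0 (α / 2)) :
    StrictAntiOn (qiteBoundFn β) (Set.Ioi 0) ∧
    (∃! q : ℝ, 0 < q ∧ qiteBoundFn β q = 2 * ε' / α) ∧
    (∀ β₁ β₂ q₁ q₂ : ℝ, 0 < β₁ → β₁ < β₂ → 0 < q₁ → 0 < q₂ →
      qiteBoundFn β₁ q₁ = 2 * ε' / α → qiteBoundFn β₂ q₂ = 2 * ε' / α → q₁ < q₂) := by
  obtain ⟨hα0, hα1⟩ := hα
  obtain ⟨hε0, hε1⟩ := hε
  set c : ℝ := 2 * ε' / α with hc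
  have hc0 : 0 < c := by positivity
  have hc1 : c < 1 := by
    rw [hc, div_lt_one hα0]; linarith
  refine ⟨qite_anti hβ, ?_, ?_⟩
  · -- existence and uniqueness
    have h0 := qite_tendsto_zero hβ
    have hTop := qite_tendsto_atTop hβ
    obtain ⟨a, hca, ha0⟩ :=
      ((h0.eventually (eventually_gt_nhds hc1)).and self_mem_nhdsWithin).exists
    have ha0 : (0:ℝ) < a := ha0
    obtain ⟨A, hAc, hAa⟩ :=
      ((hTop.eventually (eventually_lt_nhds hc0)).and (eventually_ge_atTop (a + 1))).exists
    have haA : a ≤ A := by linarith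
    have hsub : Set.Icc a A ⊆ Set.Ioi 0 := fun x hx => lt_of_lt_of_le ha0 hx.1
    have hivt := intermediate_value_Icc' haA ((qite_contOn hβ).mono hsub)
    obtain ⟨q, hqmem, hqc⟩ := hivt ⟨le_of_lt hAc, le_of_lt hca⟩
    refine ⟨q, ⟨lt_of_lt_of_le ha0 hqmem.1, hqc⟩, ?_⟩
    rintro q' ⟨hq'0, hq'c⟩
    exact (qite_anti hβ).injOn hq'0 (hsub hqmem) (hq'c.trans hqc.symm)
  · intro β₁ β₂ q₁ q₂ hβ₁ h12 hq₁ hq₂ he₁ he₂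
    by_contra hle
    push_neg at hle
    have h1 : qiteBoundFn β₂ q₁ ≤ qiteBoundFn β₂ q₂ := by
      rcases eq_or_lt_of_le hle with h | h
      · rw [h]
      · exact le_of_lt ((qite_anti (lt_trans hβ₁ h12)) hq₂ hq₁ h)
    have h2 : qiteBoundFn β₁ q₁ < qiteBoundFn β₂ q₁ := qite_mono_beta hβ₁ h12 hq₁
    rw [he₂] at h1
    rw [he₁] at h2
    linarith
end

section
/- Let N ≥ 3 and o = 2^{−N/2}. Then the real numbers β₁⁻ = (N/4)·ln(2^{1/N}/(2^{1/2} − 2^{1/N})) and β₁⁺ = (N/4)·ln(2.2^{1/N}/(2^{1/2} − 2.2^{1/N})) are well-defined (the arguments of the logarithms are positive) and satisfy 0.88·N/4 ≤ β₁⁻ ≤ β₁⁺ ≤ 2.44·N/4. Moreover, for p(β) = e^{−2β}·cosh(2β/N)^N, one has p(β₁⁻) = o/2 and p(β₁⁺) = o/2.2. -/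
set_option maxHeartbeats 1000000

-- a ^ (1/n) ≤ c  given a ≤ c^n
lemma aux_rpow_inv_le {a c : ℝ} (ha : 0 ≤ a) (hc : 0 ≤ c) (n : ℕ) (hn : n ≠ 0)
    (h : a ≤ c ^ n) : a ^ ((1:ℝ)/n) ≤ c := by
  have hn' : (n:ℝ) ≠ 0 := Nat.cast_ne_zero.mpr hn
  calc a ^ ((1:ℝ)/n) ≤ (c ^ n) ^ ((1:ℝ)/n) := Real.rpow_le_rpow ha h (by positivity)
    _ = c := by
      rw [← Real.rpow_natCast c n, ← Real.rpow_mul hc, mul_one_div, div_self hn',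
        Real.rpow_one]

lemma aux_le_rpow_inv {a c : ℝ} (hc : 0 ≤ c) (n : ℕ) (hn : n ≠ 0)
    (h : c ^ n ≤ a) : c ≤ a ^ ((1:ℝ)/n) := by
  have hn' : (n:ℝ) ≠ 0 := Nat.cast_ne_zero.mpr hn
  calc c = (c ^ n) ^ ((1:ℝ)/n) := by
        rw [← Real.rpow_natCast c n, ← Real.rpow_mul hc, mul_one_div, div_self hn',
          Real.rpow_one]
    _ ≤ a ^ ((1:ℝ)/n) := Real.rpow_le_rpow (by positivity) h (by positivity)

lemma aux_key (N : ℕ) (hN : 1 ≤ N) (k : ℝ) (hk : 0 < k)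
    (hu : k ^ ((1:ℝ)/N) < (2:ℝ) ^ ((1:ℝ)/2)) :
    Real.exp (-2 * ((N:ℝ)/4 * Real.log (k ^ ((1:ℝ)/N) / ((2:ℝ)^((1:ℝ)/2) - k^((1:ℝ)/N))))) *
      Real.cosh (2 * ((N:ℝ)/4 * Real.log (k ^ ((1:ℝ)/N) / ((2:ℝ)^((1:ℝ)/2) - k^((1:ℝ)/N)))) / N) ^ N
      = (2:ℝ) ^ (-(N:ℝ)/2) / k := by
  have hN' : (N:ℝ) ≠ 0 := Nat.cast_ne_zero.mpr (by omega)
  set u := k ^ ((1:ℝ)/N) with hu_def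
  set s := (2:ℝ) ^ ((1:ℝ)/2) with hs_def
  have hu0 : 0 < u := Real.rpow_pos_of_pos hk _
  have hsu : 0 < s - u := sub_pos.mpr hu
  set r := u / (s - u) with hr_def
  have hr : 0 < r := div_pos hu0 hsu
  set L := Real.log r with hL_def
  have h1 : -2 * ((N:ℝ)/4 * L) = (N:ℝ) * (-(L/2)) := by ring
  have h2 : 2 * ((N:ℝ)/4 * L) / N = L/2 := by field_simp; ring
  set t := Real.exp (L/2) with ht_def
  have ht : 0 < t := Real.exp_pos _
  have ht2 : t^2 = r := by
    rw [sq, ht_def, ← Real.exp_add]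
    have hL2 : L/2 + L/2 = L := by ring
    rw [hL2, hL_def, Real.exp_log hr]
  have hcosh : Real.cosh (L/2) = (t + t⁻¹)/2 := by
    rw [Real.cosh_eq, ht_def, ← Real.exp_neg]
  have hexp : Real.exp ((N:ℝ) * (-(L/2))) = (t⁻¹)^N := by
    rw [Real.exp_nat_mul, ← Real.exp_neg]
  rw [h1, h2, hexp, hcosh, ← mul_pow]
  have h3 : t⁻¹ * ((t + t⁻¹)/2) = (r+1)/(2*r) := by
    rw [← ht2]; field_simp
  have h4 : (r+1)/(2*r) = s/(2*u) := by
    rw [hr_def]; field_simp; ring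
  rw [h3, h4, div_pow, mul_pow]
  have h5 : s ^ N = (2:ℝ) ^ ((N:ℝ)/2) := by
    rw [hs_def, ← Real.rpow_natCast ((2:ℝ) ^ ((1:ℝ)/2)) N, ← Real.rpow_mul (by norm_num)]
    ring_nf
  have h6 : u ^ N = k := by
    rw [hu_def, ← Real.rpow_natCast (k ^ ((1:ℝ)/N)) N, ← Real.rpow_mul hk.le,
      one_div, inv_mul_cancel₀ hN', Real.rpow_one]
  have h7 : (2:ℝ) ^ N = (2:ℝ) ^ ((N:ℝ)) := (Real.rpow_natCast 2 N).symm
  rw [h5, h6, h7, div_mul_eq_div_div, ← Real.rpow_sub (by norm_num)]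
  congr 1
  ring

lemma aux_exp_lb (x : ℝ) (hx : 0 ≤ x) (n : ℕ) (hn : n ≠ 0) :
    (1 + x/n)^n ≤ Real.exp x := by
  have hn' : (n:ℝ) ≠ 0 := Nat.cast_ne_zero.mpr hn
  calc (1 + x/n)^n ≤ (Real.exp (x/n))^n := by
        apply pow_le_pow_left₀ (by positivity)
        linarith [Real.add_one_le_exp (x/n)]
    _ = Real.exp x := by
        rw [← Real.exp_nat_mul]
        congr 1
        field_simp

lemma aux_exp088 : Real.exp 0.88 ≤ 2.412 := by
  have hp : (0:ℝ) < (1 + 0.12/(32:ℕ))^(32:ℕ) := by positivity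
  have h12 : ((1:ℝ) + 0.12/(32:ℕ))^(32:ℕ) ≤ Real.exp 0.12 :=
    aux_exp_lb 0.12 (by norm_num) 32 (by norm_num)
  have hmul : Real.exp 0.88 * Real.exp 0.12 = Real.exp 1 := by
    rw [← Real.exp_add]; norm_num
  have h1 : Real.exp 1 < 2.7182818286 := Real.exp_one_lt_d9
  have hnum : (2.7182818286:ℝ) ≤ 2.412 * (1 + 0.12/(32:ℕ))^(32:ℕ) := by norm_num
  nlinarith [Real.exp_pos 0.88, Real.exp_pos 0.12,
    mul_le_mul_of_nonneg_left h12 (Real.exp_pos 0.88).le]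

lemma aux_exp244 : (11.448:ℝ) ≤ Real.exp 2.44 := by
  have h44 : ((1:ℝ) + 0.44/(64:ℕ))^(64:ℕ) ≤ Real.exp 0.44 :=
    aux_exp_lb 0.44 (by norm_num) 64 (by norm_num)
  have e1 : (2.7182818283:ℝ) < Real.exp 1 := Real.exp_one_gt_d9
  have hmul : Real.exp 1 * Real.exp 1 * Real.exp 0.44 = Real.exp 2.44 := by
    rw [← Real.exp_add, ← Real.exp_add]; norm_num
  have hnum : (11.448:ℝ) ≤ 2.7182818283 * 2.7182818283 * ((1:ℝ) + 0.44/(64:ℕ))^(64:ℕ) := by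
    norm_num
  nlinarith [Real.exp_pos 0.44, Real.exp_pos 1,
    mul_le_mul_of_nonneg_left h44 (mul_pos (Real.exp_pos 1) (Real.exp_pos 1)).le]

theorem stmt_16 (N : ℕ) (hN : 3 ≤ N) (o : ℝ) (ho : o = (2 : ℝ) ^ (-(N : ℝ) / 2))
    (β₁m β₁p : ℝ)
    (hm : β₁m = (N : ℝ) / 4 *
        Real.log ((2 : ℝ) ^ ((1 : ℝ) / N) / ((2 : ℝ) ^ ((1 : ℝ) / 2) - (2 : ℝ) ^ ((1 : ℝ) / N))))
    (hp : β₁p = (N : ℝ) / 4 *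
        Real.log ((2.2 : ℝ) ^ ((1 : ℝ) / N) / ((2 : ℝ) ^ ((1 : ℝ) / 2) - (2.2 : ℝ) ^ ((1 : ℝ) / N))))
    (p : ℝ → ℝ)
    (hpdef : ∀ β, p β = Real.exp (-2 * β) * Real.cosh (2 * β / N) ^ N) :
    (0 < (2 : ℝ) ^ ((1 : ℝ) / N) / ((2 : ℝ) ^ ((1 : ℝ) / 2) - (2 : ℝ) ^ ((1 : ℝ) / N))) ∧
    (0 < (2.2 : ℝ) ^ ((1 : ℝ) / N) / ((2 : ℝ) ^ ((1 : ℝ) / 2) - (2.2 : ℝ) ^ ((1 : ℝ) / N))) ∧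
    0.88 * N / 4 ≤ β₁m ∧ β₁m ≤ β₁p ∧ β₁p ≤ 2.44 * N / 4 ∧
    p β₁m = o / 2 ∧ p β₁p = o / 2.2 := by
  have hN3 : (3:ℝ) ≤ (N:ℝ) := by exact_mod_cast hN
  have hNne : (N:ℝ) ≠ 0 := by positivity
  set x := (2:ℝ) ^ ((1:ℝ)/N) with hx_def
  set y := (2.2:ℝ) ^ ((1:ℝ)/N) with hy_def
  set s := (2:ℝ) ^ ((1:ℝ)/2) with hs_def
  have sLB : (1.4142135:ℝ) ≤ s := aux_le_rpow_inv (by norm_num) 2 (by norm_num) (by norm_num)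
  have sUB : s ≤ (1.4142136:ℝ) := aux_rpow_inv_le (by norm_num) (by norm_num) 2 (by norm_num)
    (by norm_num)
  have h13 : (1:ℝ)/N ≤ (1:ℝ)/3 := by
    apply div_le_div_of_nonneg_left (by norm_num) (by norm_num) hN3
  have hx1 : (1:ℝ) ≤ x := by
    rw [hx_def]
    calc (1:ℝ) = 1 ^ ((1:ℝ)/N) := (Real.one_rpow _).symm
      _ ≤ 2 ^ ((1:ℝ)/N) := Real.rpow_le_rpow (by norm_num) (by norm_num) (by positivity)
  have hy1 : (1:ℝ) ≤ y := by
    rw [hy_def]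
    calc (1:ℝ) = 1 ^ ((1:ℝ)/N) := (Real.one_rpow _).symm
      _ ≤ 2.2 ^ ((1:ℝ)/N) := Real.rpow_le_rpow (by norm_num) (by norm_num) (by positivity)
  have hxy : x ≤ y :=
    Real.rpow_le_rpow (by norm_num) (by norm_num) (by positivity)
  have hyU : y ≤ 1.3006 := by
    rw [hy_def]
    calc (2.2:ℝ) ^ ((1:ℝ)/N) ≤ (2.2:ℝ) ^ ((1:ℝ)/3) := by
          apply Real.rpow_le_rpow_of_exponent_le (by norm_num)
          exact_mod_cast h13
      _ ≤ 1.3006 := aux_rpow_inv_le (by norm_num) (by norm_num) 3 (by norm_num) (by norm_num)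
  have hxU : x ≤ 1.3006 := hxy.trans hyU
  have hys : y < s := by nlinarith
  have hxs : x < s := lt_of_le_of_lt hxy hys
  have hsx : (0:ℝ) < s - x := by linarith
  have hsy : (0:ℝ) < s - y := by linarith
  have hx0 : (0:ℝ) < x := by linarith
  have hy0 : (0:ℝ) < y := by linarith
  have hrx : (0:ℝ) < x / (s - x) := div_pos hx0 hsx
  have hry : (0:ℝ) < y / (s - y) := div_pos hy0 hsy
  -- lower bound for the log
  have LmLB : (0.88:ℝ) ≤ Real.log (x / (s - x)) := by
    rw [Real.le_log_iff_exp_le hrx, le_div_iff₀ hsx]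
    nlinarith [aux_exp088, Real.exp_pos 0.88]
  -- upper bound for the log
  have LpUB : Real.log (y / (s - y)) ≤ 2.44 := by
    rw [Real.log_le_iff_le_exp hry, div_le_iff₀ hsy]
    nlinarith [aux_exp244, Real.exp_pos 2.44]
  -- monotonicity
  have Lle : Real.log (x / (s - x)) ≤ Real.log (y / (s - y)) := by
    apply Real.log_le_log hrx
    rw [div_le_div_iff₀ hsx hsy]
    nlinarith
  have hN4 : (0:ℝ) ≤ (N:ℝ)/4 := by positivity
  refine ⟨hrx, hry, ?_, ?_, ?_, ?_, ?_⟩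
  · rw [hm]; nlinarith
  · rw [hm, hp]; exact mul_le_mul_of_nonneg_left Lle hN4
  · rw [hp]; nlinarith
  · rw [hpdef, hm, ho]
    exact aux_key N (by omega) 2 (by norm_num) hxs
  · rw [hpdef, hp, ho]
    exact aux_key N (by omega) 2.2 (by norm_num) hys
end

section
/- Let q be an even natural number and let φ₁,…,φ_{q+1} ∈ ℝ. Define the 2×2 unitary product M(θ) = e^{iφ_{q+1}Z} · ∏_{k=1}^{q/2} ( e^{−iθX} e^{iφ_{2k}Z} · e^{iθX} e^{iφ_{2k−1}Z} ), where X and Z are the Pauli matrices. Then there exist polynomials B, D ∈ ℂ[x] with deg B ≤ q, deg D ≤ q−1, B even, D odd, and |B(x)|² + (1−x²)|D(x)|² = 1 for all x ∈ [−1,1], such that for all θ ∈ [−π,π], the (1,1) entry of M(θ) equals B(cos θ) and the (1,2) entry equals i·sin θ·D(cos θ). -/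
open scoped Matrix ComplexOrder

/-- `e^{iφZ}` as an explicit 2×2 matrix. -/
noncomputable def expZ (φ : ℝ) : Matrix (Fin 2) (Fin 2) ℂ :=
  !![Complex.exp (φ * Complex.I), 0; 0, Complex.exp (-(φ * Complex.I))]

/-- `e^{iθX}` as an explicit 2×2 matrix. -/
noncomputable def expX (θ : ℝ) : Matrix (Fin 2) (Fin 2) ℂ :=
  !![Complex.cos θ, Complex.I * Complex.sin θ;
     Complex.I * Complex.sin θ, Complex.cos θ]

/-- The QSP pulse sequence
`M(θ) = e^{iφ_{q+1}Z} ∏_{k=1}^{q/2} e^{-iθX} e^{iφ_{2k}Z} e^{iθX} e^{iφ_{2k-1}Z}`. -/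
noncomputable def qspSeq (q : ℕ) (φ : ℕ → ℝ) (θ : ℝ) : Matrix (Fin 2) (Fin 2) ℂ :=
  expZ (φ (q + 1)) *
    (List.ofFn fun k : Fin (q / 2) =>
      expX (-θ) * expZ (φ (2 * (k : ℕ) + 2)) * expX θ * expZ (φ (2 * (k : ℕ) + 1))).prod

/-! Every factor `e^{iφZ}` and `e^{±iθX}` has the shape
`[[A(cos θ), i sin θ B(cos θ)], [i sin θ C(cos θ), D(cos θ)]]`, where, if `d` is the number of
`X`-rotations involved, `A, D` have degree `≤ d` and the parity of `d`, and `B, C` have degree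
`< d` and the opposite parity. This shape is closed under multiplication, with `d` adding up,
because `sin² θ = 1 - cos² θ`. The normalization identity expresses that the first row of the
unitary matrix `M(arccos x)` is a unit vector. -/

open Polynomial

section Degree

variable {R : Type*}

theorem Polynomial.degree_mul_lt_of_le_of_lt [Semiring R] {p q : R[X]} {d e : ℕ}
    (hp : p.degree ≤ d) (hq : q.degree < e) : (p * q).degree < ↑(d + e) := by
  rcases eq_or_ne p 0 with rfl | hp0
  · simp
  rw [Nat.cast_add]
  exact (degree_mul_le p q).trans_lt
    (WithBot.add_lt_add_of_le_of_lt (degree_ne_bot.mpr hp0) hp hq)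

theorem Polynomial.degree_one_sub_X_sq_mul_mul_le [Ring R] {p q : R[X]} {d e : ℕ}
    (hp : p.degree < d) (hq : q.degree < e) : ((1 - X ^ 2) * p * q).degree ≤ ↑(d + e) := by
  have h2 : (1 - X ^ 2 : R[X]).degree ≤ 2 := by compute_degree
  have hp1 := Nat.WithBot.add_one_le_of_lt hp
  have hq1 := Nat.WithBot.add_one_le_of_lt hq
  calc ((1 - X ^ 2) * p * q).degree ≤ (1 - X ^ 2 : R[X]).degree + p.degree + q.degree :=
        (degree_mul_le _ _).trans (by gcongr; exact degree_mul_le _ _)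
    _ ≤ 2 + p.degree + q.degree := by gcongr
    _ = (p.degree + 1) + (q.degree + 1) := by ring
    _ ≤ ↑(d + e) := by push_cast; gcongr

end Degree

def HasParity (d : ℕ) (p : ℂ[X]) : Prop :=
  ∀ x, p.eval (-x) = (-1) ^ d * p.eval x

noncomputable def qspMatrix (A B C D : ℂ[X]) (θ : ℝ) : Matrix (Fin 2) (Fin 2) ℂ :=
  !![A.eval (Real.cos θ : ℂ), Complex.I * (Real.sin θ : ℂ) * B.eval (Real.cos θ : ℂ);
     Complex.I * (Real.sin θ : ℂ) * C.eval (Real.cos θ : ℂ), D.eval (Real.cos θ : ℂ)]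

theorem qspMatrix_mul (A B C D A' B' C' D' : ℂ[X]) (θ : ℝ) :
    qspMatrix A B C D θ * qspMatrix A' B' C' D' θ =
      qspMatrix (A * A' - (1 - X ^ 2) * B * C') (A * B' + B * D')
        (C * A' + D * C') (D * D' - (1 - X ^ 2) * C * B') θ := by
  have hs : (Real.sin θ : ℂ) ^ 2 = 1 - (Real.cos θ : ℂ) ^ 2 := by
    rw [eq_sub_iff_add_eq]
    exact_mod_cast Real.sin_sq_add_cos_sq θ
  simp only [qspMatrix]
  generalize (Real.sin θ : ℂ) = s at hs ⊢
  generalize (Real.cos θ : ℂ) = c at hs ⊢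
  ext i j
  fin_cases i <;> fin_cases j <;> simp [Matrix.mul_apply]
  · linear_combination
      (-(B.eval c * C'.eval c)) * hs + (s ^ 2 * B.eval c * C'.eval c) * Complex.I_sq
  · ring
  · ring
  · linear_combination
      (-(C.eval c * B'.eval c)) * hs + (s ^ 2 * C.eval c * B'.eval c) * Complex.I_sq

theorem qspMatrix_neg (A B C D : ℂ[X]) (θ : ℝ) :
    qspMatrix A B C D (-θ) = qspMatrix A (-B) (-C) D θ := by
  ext i j
  fin_cases i <;> fin_cases j <;> simp [qspMatrix]

/-- `degree < d` stands for `deg ≤ d - 1` without truncated subtraction, and forces `B = C = 0`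
when `d = 0`. -/
def IsQSPForm (d : ℕ) (M : ℝ → Matrix (Fin 2) (Fin 2) ℂ) : Prop :=
  ∃ A B C D : ℂ[X], A.degree ≤ d ∧ B.degree < d ∧ C.degree < d ∧ D.degree ≤ d ∧
    HasParity d A ∧ HasParity (d + 1) B ∧ HasParity (d + 1) C ∧ HasParity d D ∧
    M = qspMatrix A B C D

namespace IsQSPForm

variable {d e : ℕ} {M N : ℝ → Matrix (Fin 2) (Fin 2) ℂ}

theorem mul (hM : IsQSPForm d M) (hN : IsQSPForm e N) : IsQSPForm (d + e) (M * N) := by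
  obtain ⟨A, B, C, D, hA, hB, hC, hD, pA, pB, pC, pD, rfl⟩ := hM
  obtain ⟨A', B', C', D', hA', hB', hC', hD', pA', pB', pC', pD', rfl⟩ := hN
  refine ⟨_, _, _, _, ?_, ?_, ?_, ?_, ?_, ?_, ?_, ?_,
    funext fun θ => qspMatrix_mul A B C D A' B' C' D' θ⟩
  · exact (degree_sub_le _ _).trans <| max_le
      (degree_mul_le_of_le hA hA' |>.trans_eq (Nat.cast_add d e).symm)
      (degree_one_sub_X_sq_mul_mul_le hB hC')
  · refine (degree_add_le _ _).trans_lt <| max_lt (degree_mul_lt_of_le_of_lt hA hB') ?_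
    rw [mul_comm, add_comm]
    exact degree_mul_lt_of_le_of_lt hD' hB
  · refine (degree_add_le _ _).trans_lt <| max_lt ?_ (degree_mul_lt_of_le_of_lt hD hC')
    rw [mul_comm, add_comm]
    exact degree_mul_lt_of_le_of_lt hA' hC
  · exact (degree_sub_le _ _).trans <| max_le
      (degree_mul_le_of_le hD hD' |>.trans_eq (Nat.cast_add d e).symm)
      (degree_one_sub_X_sq_mul_mul_le hC hB')
  all_goals
    intro x
    simp only [eval_sub, eval_add, eval_mul, eval_one, eval_pow, eval_X, pA x, pB x, pC x, pD x,
      pA' x, pB' x, pC' x, pD' x]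
    ring

theorem comp_neg (hM : IsQSPForm d M) : IsQSPForm d (fun θ => M (-θ)) := by
  obtain ⟨A, B, C, D, hA, hB, hC, hD, pA, pB, pC, pD, rfl⟩ := hM
  refine ⟨A, -B, -C, D, hA, by rwa [degree_neg], by rwa [degree_neg], hD, pA,
    fun x => by simp [pB x], fun x => by simp [pC x], pD, funext fun θ => qspMatrix_neg ..⟩

theorem list_prod {n : ℕ} {f : Fin n → ℝ → Matrix (Fin 2) (Fin 2) ℂ}
    (hf : ∀ k, IsQSPForm d (f k)) :
    IsQSPForm (n * d) (fun θ => (List.ofFn fun k => f k θ).prod) := by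
  induction n with
  | zero =>
    refine ⟨1, 0, 0, 1, by simp, by simp, by simp, by simp, fun _ => by simp,
      fun _ => by simp, fun _ => by simp, fun _ => by simp, funext fun θ => ?_⟩
    ext i j
    fin_cases i <;> fin_cases j <;> simp [qspMatrix]
  | succ n ih =>
    have := (hf 0).mul (ih fun k => hf k.succ)
    simp only [List.ofFn_succ, List.prod_cons]
    rwa [add_mul, one_mul, add_comm]

end IsQSPForm

theorem isQSPForm_expZ (φ : ℝ) : IsQSPForm 0 fun _ => expZ φ := by
  refine ⟨C (Complex.exp (φ * Complex.I)), 0, 0, C (Complex.exp (-(φ * Complex.I))),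
    degree_C_le, by simp, by simp, degree_C_le, fun _ => by simp,
    fun _ => by simp, fun _ => by simp, fun _ => by simp, funext fun θ => ?_⟩
  ext i j
  fin_cases i <;> fin_cases j <;> simp [qspMatrix, expZ]

theorem isQSPForm_expX : IsQSPForm 1 expX := by
  refine ⟨X, 1, 1, X, degree_X_le, by simp, by simp, degree_X_le, fun _ => by simp,
    fun _ => by simp, fun _ => by simp, fun _ => by simp, funext fun θ => ?_⟩
  ext i j
  fin_cases i <;> fin_cases j <;> simp [qspMatrix, expX]

theorem isQSPForm_qspSeq {q : ℕ} (hq : Even q) (φ : ℕ → ℝ) :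
    IsQSPForm q (qspSeq q φ) := by
  have hpulse : ∀ k : Fin (q / 2), IsQSPForm 2 fun θ =>
      expX (-θ) * expZ (φ (2 * (k : ℕ) + 2)) * expX θ * expZ (φ (2 * (k : ℕ) + 1)) :=
    fun _ => ((isQSPForm_expX.comp_neg.mul (isQSPForm_expZ _)).mul isQSPForm_expX).mul
      (isQSPForm_expZ _)
  have := (isQSPForm_expZ (φ (q + 1))).mul (IsQSPForm.list_prod hpulse)
  rwa [zero_add, Nat.div_two_mul_two_of_even hq] at this

theorem Matrix.sum_norm_sq_apply_of_mem_unitaryGroup {n 𝕜 : Type*} [Fintype n] [DecidableEq n]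
    [RCLike 𝕜] {U : Matrix n n 𝕜} (hU : U ∈ Matrix.unitaryGroup n 𝕜) (i : n) :
    ∑ j, ‖U i j‖ ^ 2 = 1 := by
  have h : (U * star U) i i = 1 := by rw [Matrix.mem_unitaryGroup_iff.mp hU, Matrix.one_apply_eq]
  simp only [Matrix.mul_apply, Matrix.star_apply, RCLike.star_def, RCLike.mul_conj] at h
  exact_mod_cast h

theorem expZ_mem_unitaryGroup (φ : ℝ) : expZ φ ∈ Matrix.unitaryGroup (Fin 2) ℂ := by
  rw [Matrix.mem_unitaryGroup_iff]
  ext i j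
  fin_cases i <;> fin_cases j <;>
    simp [expZ, Matrix.mul_apply, ← Complex.exp_conj, ← Complex.exp_add]

theorem expX_mem_unitaryGroup (θ : ℝ) : expX θ ∈ Matrix.unitaryGroup (Fin 2) ℂ := by
  rw [Matrix.mem_unitaryGroup_iff]
  have hs : (Real.sin θ : ℂ) ^ 2 + (Real.cos θ : ℂ) ^ 2 = 1 := by
    exact_mod_cast Real.sin_sq_add_cos_sq θ
  ext i j
  fin_cases i <;> fin_cases j <;>
    simp [expX, Matrix.mul_apply, ← Complex.ofReal_cos, ← Complex.ofReal_sin]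
  · linear_combination hs - (Real.sin θ : ℂ) ^ 2 * Complex.I_sq
  · ring
  · ring
  · linear_combination hs - (Real.sin θ : ℂ) ^ 2 * Complex.I_sq

theorem qspSeq_mem_unitaryGroup (q : ℕ) (φ : ℕ → ℝ) (θ : ℝ) :
    qspSeq q φ θ ∈ Matrix.unitaryGroup (Fin 2) ℂ := by
  refine mul_mem (expZ_mem_unitaryGroup _) (Submonoid.list_prod_mem _ fun U hU => ?_)
  obtain ⟨k, rfl⟩ := List.mem_ofFn.mp hU
  exact mul_mem (mul_mem (mul_mem (expX_mem_unitaryGroup _) (expZ_mem_unitaryGroup _))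
    (expX_mem_unitaryGroup _)) (expZ_mem_unitaryGroup _)

theorem norm_eval_sq_add_of_qspMatrix_mem_unitaryGroup {A B C D : ℂ[X]} {x : ℝ}
    (hx : x ∈ Set.Icc (-1 : ℝ) 1)
    (hU : qspMatrix A B C D (Real.arccos x) ∈ Matrix.unitaryGroup (Fin 2) ℂ) :
    ‖A.eval (x : ℂ)‖ ^ 2 + (1 - x ^ 2) * ‖B.eval (x : ℂ)‖ ^ 2 = 1 := by
  have hrow := Matrix.sum_norm_sq_apply_of_mem_unitaryGroup hU 0
  have hsin : Real.sin (Real.arccos x) ^ 2 = 1 - x ^ 2 := by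
    rw [Real.sin_arccos, Real.sq_sqrt (by nlinarith [hx.1, hx.2])]
  simp only [Fin.sum_univ_two, qspMatrix, Matrix.of_apply, Matrix.cons_val', Matrix.cons_val_zero,
    Matrix.cons_val_one, Matrix.empty_val', Matrix.cons_val_fin_one, norm_mul, Complex.norm_I,
    one_mul, Complex.norm_real, Real.norm_eq_abs, mul_pow, sq_abs, hsin,
    Real.cos_arccos hx.1 hx.2] at hrow
  exact hrow

theorem stmt_18 (q : ℕ) (hq : Even q) (φ : ℕ → ℝ) :
    ∃ B D : Polynomial ℂ,
      B.natDegree ≤ q ∧ D.natDegree ≤ q - 1 ∧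
      (∀ x : ℂ, B.eval (-x) = B.eval x) ∧
      (∀ x : ℂ, D.eval (-x) = -D.eval x) ∧
      (∀ x : ℝ, x ∈ Set.Icc (-1 : ℝ) 1 →
        ‖B.eval (x : ℂ)‖ ^ 2 +
          (1 - x ^ 2) * ‖D.eval (x : ℂ)‖ ^ 2 = 1) ∧
      ∀ θ : ℝ, θ ∈ Set.Icc (-Real.pi) Real.pi →
        qspSeq q φ θ 0 0 = B.eval ((Real.cos θ : ℝ) : ℂ) ∧
        qspSeq q φ θ 0 1 = Complex.I * (Real.sin θ : ℝ) * D.eval ((Real.cos θ : ℝ) : ℂ) := by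
  obtain ⟨A, B, C, D, hA, hB, -, -, pA, pB, -, -, hM⟩ := isQSPForm_qspSeq hq φ
  refine ⟨A, B, natDegree_le_iff_degree_le.mpr hA, ?_, fun x => ?_, fun x => ?_,
    fun x hx => ?_, fun θ _ => by simp [hM, qspMatrix]⟩
  · rcases eq_or_ne B 0 with rfl | hB0
    · simp
    · have := (natDegree_lt_iff_degree_lt hB0).mpr hB
      omega
  · rw [pA x, hq.neg_one_pow, one_mul]
  · rw [pB x, hq.add_one.neg_one_pow, neg_one_mul]
  · exact norm_eval_sq_add_of_qspMatrix_mem_unitaryGroup hx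
      (hM ▸ qspSeq_mem_unitaryGroup q φ (Real.arccos x))
end
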